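/- Let p be an odd prime and let γ be a p-core. The p(p+3)/2 partitions ⟨i,j⟩ for 0 ≤ i < j ≤ p−1, ⟨i⟩ for 0 ≤ i ≤ p−1, and ⟨i²⟩ for 0 ≤ i ≤ p−1 are pairwise distinct, and they are precisely the partitions of |γ| + 2p whose p-core is γ. -/

import Mathlib

/-!
Read `B = B_N(γ)` on the `p`-abacus: bead `b` sits on runner `b % p` at level `b / p`. Since `γ`
is a `p`-core, `B` is flush: every runner carries an initial segment of levels, and the top beads
of the runners are the `ρ i`. A partition with `p`-core `γ` has as many beads as `B` on every
runner, and having `|γ| + 2p` nodes means that its levels add up to those of `B` plus `2`. A set of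
`n` levels whose sum exceeds `0 + 1 + ⋯ + (n - 1)` by `e ≤ 2` is `{0, …, n - 1}` with one level
`x` moved up to `x + e`. So either the top beads of two runners move up one level (`⟨i,j⟩`), or on
one runner the top bead moves up two levels (`⟨i⟩`) or the bead below it jumps over it (`⟨i²⟩`);
conversely, these moves keep the bead counts of the runners and add `2p` to the bead sum. The
partitions are told apart by the beads they add to `B`. Finally, residue counts do not depend on
the number of beads, since one more bead shifts every bead, hence every residue, up by one.
-/

namespace ArxivW2

/-- A partition of a natural number, given by its (weakly decreasing, finitely
supported) sequence of parts, `part i` being the `(i+1)`-st part. -/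
structure PartitionNat : Type where
  part : ℕ → ℕ
  antitone : Antitone part
  finite_support : (Function.support part).Finite

namespace PartitionNat

/-- The rank `|λ|` of a partition: the sum of its parts. -/
noncomputable def size (μ : PartitionNat) : ℕ := ∑ᶠ i, μ.part i

/-- The number of nonzero parts of a partition. -/
noncomputable def len (μ : PartitionNat) : ℕ := (Function.support μ.part).ncard

/-- The `(j+1)`-st part of the conjugate partition: `λ'_{j+1} = #{i : λ_i ≥ j+1}`. -/
noncomputable def conj (μ : PartitionNat) (j : ℕ) : ℕ := {i : ℕ | j + 1 ≤ μ.part i}.ncard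

/-- A partition is self-conjugate if it equals its conjugate. -/
def SelfConj (μ : PartitionNat) : Prop := ∀ j, μ.part j = μ.conj j

/-- `(i, j)` (0-indexed) is a node of the Young diagram of `μ`. -/
def IsNode (μ : PartitionNat) (i j : ℕ) : Prop := j < μ.part i

/-- The hook length of the (0-indexed) node `(i,j)`:
`h = λ_{i+1} + λ'_{j+1} − (i+1) − (j+1) + 1`. -/
noncomputable def hook (μ : PartitionNat) (i j : ℕ) : ℕ := μ.part i + μ.conj j - (i + j + 1)

/-- A partition is a `p`-core if no hook length of a node is divisible by `p`. -/
def IsCore (p : ℕ) (μ : PartitionNat) : Prop := ∀ i j, μ.IsNode i j → ¬ p ∣ μ.hook i j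

/-- The `p`-weight of a partition: the number of nodes whose hook length is
divisible by `p`. -/
noncomputable def pweight (p : ℕ) (μ : PartitionNat) : ℕ :=
  {x : ℕ × ℕ | μ.IsNode x.1 x.2 ∧ p ∣ μ.hook x.1 x.2}.ncard

/-- The `N`-bead beta-set `B_N(λ) = {λ_i + N − i : 1 ≤ i ≤ N}` of a partition
(meaningful when `N ≥ len λ`). -/
def betaSet (N : ℕ) (μ : PartitionNat) : Finset ℕ :=
  (Finset.range N).image fun i => μ.part i + (N - 1 - i)

/-- A partition is `p`-regular if no nonzero part is repeated `p` or more times. -/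
def Regular (p : ℕ) (μ : PartitionNat) : Prop :=
  ∀ i, μ.part i ≠ 0 → μ.part (i + p - 1) < μ.part i

end PartitionNat

open PartitionNat

/-- `γ` is the `p`-core of `lam`: `γ` is a `p`-core, and for some `N` at least the
number of parts of both, the `N`-bead beta-sets of `lam` and `γ` have the same number
of elements in each residue class mod `p`. -/
def HasCore (p : ℕ) (lam gam : PartitionNat) : Prop :=
  IsCore p gam ∧ ∃ N : ℕ, lam.len ≤ N ∧ gam.len ≤ N ∧ ∀ r : ℕ,
    ((betaSet N lam).filter fun b => b % p = r).card =
      ((betaSet N gam).filter fun b => b % p = r).card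

/-- Membership in the `p`-block of weight `w` with `p`-core `gam`. -/
def InBlock (p w : ℕ) (gam lam : PartitionNat) : Prop :=
  lam.size = gam.size + w * p ∧ HasCore p lam gam

/-- The dominance order: `lam ⊴ mu`. -/
def Dom (lam mu : PartitionNat) : Prop :=
  ∀ k : ℕ, ∑ i ∈ Finset.range k, lam.part i ≤ ∑ i ∈ Finset.range k, mu.part i

/-- `mu` is obtained from `lam` by removing a `p`-rim-hook of leg length `l`. -/
def RemoveHook (p : ℕ) (lam mu : PartitionNat) (l : ℕ) : Prop :=
  ∃ N b : ℕ, lam.len ≤ N ∧ mu.len ≤ N ∧ b ∈ betaSet N lam ∧ p ≤ b ∧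
    b - p ∉ betaSet N lam ∧
    betaSet N mu = insert (b - p) (betaSet N lam \ {b}) ∧
    l = ((betaSet N lam).filter fun x => b - p < x ∧ x < b).card

/-- `lam` belongs to the set `∂_l` of the weight-2 block of `gam`:
it lies in the block and some (equivalently, every) two-step `p`-rim-hook removal
sequence from `lam` down to `gam` has leg lengths `l₁, l₂` with `|l₁ − l₂| = l`. -/
def DelClass (p : ℕ) (gam : PartitionNat) (l : ℕ) (lam : PartitionNat) : Prop :=
  InBlock p 2 gam lam ∧ ∃ mu l1 l2, RemoveHook p lam mu l1 ∧ RemoveHook p mu gam l2 ∧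
    max l1 l2 - min l1 l2 = l

/-- `ρ 0 < ρ 1 < ⋯ < ρ (p−1)` is the increasing enumeration of the maxima of the
residue classes mod `p` in the `N`-bead beta-set of `gam`. -/
def IsRho (p N : ℕ) (gam : PartitionNat) (ρ : ℕ → ℕ) : Prop :=
  (∀ i j, i < j → j < p → ρ i < ρ j) ∧
  (∀ i, i < p → ρ i ∈ betaSet N gam ∧ ∀ b ∈ betaSet N gam, b % p = ρ i % p → b ≤ ρ i) ∧
  (∀ r, r < p → ∃ i, i < p ∧ ρ i % p = r)

/-- The beta-set of the partition `⟨i,j⟩` (`i < j`). -/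
def pairBeta (p : ℕ) (B : Finset ℕ) (ρ : ℕ → ℕ) (i j : ℕ) : Finset ℕ :=
  (B \ {ρ i, ρ j}) ∪ {ρ i + p, ρ j + p}

/-- The beta-set of the partition `⟨i⟩`. -/
def oneBeta (p : ℕ) (B : Finset ℕ) (ρ : ℕ → ℕ) (i : ℕ) : Finset ℕ :=
  (B \ {ρ i}) ∪ {ρ i + 2 * p}

/-- The beta-set of the partition `⟨i²⟩`. -/
def sqBeta (p : ℕ) (B : Finset ℕ) (ρ : ℕ → ℕ) (i : ℕ) : Finset ℕ :=
  (B \ {ρ i - p}) ∪ {ρ i + p}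

/-- The pyramid entry `γ_{ij}` of the block, extended by `1` for `i > j` and `0`
for `j ≥ p`. -/
def pyr (p : ℕ) (ρ : ℕ → ℕ) (i j : ℕ) : ℕ :=
  if j < i then 1 else if p ≤ j then 0 else if ρ j - ρ i < p then 1 else 0

/-- The beta-set of Fayers' partition `⌈i,j⌋` (for `0 ≤ i ≤ j ≤ p−1`, `i < p−1`),
defined by cases on the pyramid entries. -/
def fayersBeta (p : ℕ) (B : Finset ℕ) (ρ : ℕ → ℕ) (i j : ℕ) : Finset ℕ :=
  if i = j then
    (if pyr p ρ (i + 1) (i + 2) = 1 then pairBeta p B ρ (i + 1) (i + 2)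
     else oneBeta p B ρ (i + 1))
  else
    if pyr p ρ i (j + 1) = 1 then pairBeta p B ρ i (j + 1)
    else if pyr p ρ i j = 1 then oneBeta p B ρ i
    else if pyr p ρ (i + 1) j = 1 then sqBeta p B ρ j
    else pairBeta p B ρ (i + 1) j

/-- The set of `p`-BG-partitions in the block of weight `w` with core `gam`:
self-conjugate partitions in the block none of whose diagonal hook lengths is
divisible by `p`. -/
def BGset (p w : ℕ) (gam : PartitionNat) : Set PartitionNat :=
  {lam | InBlock p w gam lam ∧ SelfConj lam ∧ ∀ i, lam.IsNode i i → ¬ p ∣ lam.hook i i}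

open Finset

theorem mem_iff_lt_ncard_of_isLowerSet {S : Set ℕ} (hS : IsLowerSet S) (hfin : S.Finite)
    (i : ℕ) : i ∈ S ↔ i < S.ncard := by
  obtain h | ⟨a, rfl⟩ := hS.eq_univ_or_Iio
  · exact absurd (h ▸ hfin) Set.infinite_univ
  · simp

theorem eq_range_card_of_isLowerSet {S : Finset ℕ} (hS : IsLowerSet (S : Set ℕ)) :
    S = range S.card := by
  ext q
  rw [mem_range, ← Set.ncard_coe_finset, ← mem_iff_lt_ncard_of_isLowerSet hS S.finite_toSet,
    mem_coe]

theorem sum_range_le_sum_of_card_eq {Q : Finset ℕ} {n : ℕ} (hQ : Q.card = n) :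
    ∑ i ∈ range n, i ≤ ∑ q ∈ Q, q := by
  have h := Finset.sum_range_le_sum (s := Q.map Nat.castEmbedding) (c := 0) (by simp)
  simp only [card_map, hQ, zero_add, sum_map, Nat.castEmbedding_apply] at h
  rwa [← Nat.cast_sum, ← Nat.cast_sum, Nat.cast_le] at h

theorem exists_mem_ge_of_ne_range {Q : Finset ℕ} {n : ℕ} (hQ : Q.card = n)
    (hne : Q ≠ range n) : ∃ y ∈ Q, n ≤ y := by
  by_contra! h
  exact hne (eq_of_subset_of_card_le (fun q hq => mem_range.2 (h q hq)) (by simp [hQ]))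

theorem eq_range_of_sum_le {Q : Finset ℕ} {n : ℕ} (hQ : Q.card = n)
    (hsum : ∑ q ∈ Q, q ≤ ∑ i ∈ range n, i) : Q = range n := by
  by_contra hne
  obtain ⟨y, hy, hny⟩ := exists_mem_ge_of_ne_range hQ hne
  obtain ⟨m, rfl⟩ : ∃ m, n = m + 1 := ⟨n - 1, by have := card_pos.2 ⟨y, hy⟩; omega⟩
  have hcard : (Q.erase y).card = m := by simp [card_erase_of_mem hy, hQ]
  have := sum_erase_add Q (fun q => q) hy
  have := sum_range_le_sum_of_card_eq hcard
  rw [sum_range_succ] at hsum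
  omega

theorem exists_eq_range_sdiff_union_of_sum_eq {Q : Finset ℕ} {n e : ℕ} (hQ : Q.card = n)
    (hsum : ∑ q ∈ Q, q = ∑ i ∈ range n, i + e) (he : 0 < e) (he2 : e ≤ 2) :
    ∃ x < n, n ≤ x + e ∧ Q = (range n \ {x}) ∪ {x + e} := by
  induction e using Nat.strong_induction_on generalizing Q n with
  | _ e ih =>
  obtain ⟨y, hy, hny⟩ := exists_mem_ge_of_ne_range hQ (by rintro rfl; omega)
  obtain ⟨m, rfl⟩ : ∃ m, n = m + 1 := ⟨n - 1, by have := card_pos.2 ⟨y, hy⟩; omega⟩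
  have hcard : (Q.erase y).card = m := by simp [card_erase_of_mem hy, hQ]
  have := sum_erase_add Q (fun q => q) hy
  have := sum_range_le_sum_of_card_eq hcard
  rw [sum_range_succ] at hsum
  have hQy : Q = insert y (Q.erase y) := (insert_erase hy).symm
  rcases Nat.lt_or_ge (∑ q ∈ Q.erase y, q) (∑ i ∈ range m, i + 1) with h0 | h1
  · rw [eq_range_of_sum_le hcard (by omega)] at hQy
    refine ⟨m, by omega, by omega, ?_⟩
    rw [hQy, show y = m + e by omega]
    ext; simp; omega
  · obtain ⟨x, hx, hmx, hQ'⟩ := ih 1 (by omega) hcard (by omega) one_pos one_le_two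
    refine ⟨x, by omega, by omega, ?_⟩
    rw [hQy, hQ', show y = m + 1 by omega, show e = 2 by omega]
    ext; simp; omega

theorem exists_of_sum_eq_two {ι : Type*} [DecidableEq ι] {s : Finset ι} {f : ι → ℕ}
    (h : ∑ i ∈ s, f i = 2) :
    (∃ a ∈ s, f a = 2 ∧ ∀ b ∈ s, b ≠ a → f b = 0) ∨
    (∃ a ∈ s, ∃ b ∈ s, a ≠ b ∧ f a = 1 ∧ f b = 1 ∧ ∀ c ∈ s, c ≠ a → c ≠ b → f c = 0) := by
  obtain ⟨a, ha, hfa⟩ := exists_ne_zero_of_sum_ne_zero (by omega : ∑ i ∈ s, f i ≠ 0)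
  have hrest := add_sum_erase s f ha
  have hle := single_le_sum (fun i _ => Nat.zero_le (f i)) ha
  rcases (by omega : f a = 2 ∨ f a = 1) with h2 | h1
  · refine Or.inl ⟨a, ha, h2, fun b hb hba => ?_⟩
    exact (sum_eq_zero_iff.1 (by omega)) b (mem_erase.2 ⟨hba, hb⟩)
  · obtain ⟨b, hb, hfb⟩ := exists_ne_zero_of_sum_ne_zero (by omega : ∑ i ∈ s.erase a, f i ≠ 0)
    have hrest' := add_sum_erase _ f hb
    have hle' := single_le_sum (fun i _ => Nat.zero_le (f i)) hb
    obtain ⟨hba, hb⟩ := mem_erase.1 hb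
    refine Or.inr ⟨a, ha, b, hb, hba.symm, h1, by omega, fun c hc hca hcb => ?_⟩
    exact (sum_eq_zero_iff.1 (by omega)) c (mem_erase.2 ⟨hcb, mem_erase.2 ⟨hca, hc⟩⟩)

theorem sum_sdiff_union_image {α M : Type*} [DecidableEq α] [AddCommMonoid M] {A B : Finset α}
    {g : α → α} (hg : g.Injective) (hAB : A ⊆ B) (hdisj : Disjoint B (A.image g)) (f : α → M) :
    ∑ b ∈ (B \ A) ∪ A.image g, f b + ∑ a ∈ A, f a = ∑ b ∈ B, f b + ∑ a ∈ A, f (g a) := by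
  rw [sum_union (disjoint_of_subset_left sdiff_subset hdisj), sum_image fun _ _ _ _ h => hg h,
    add_right_comm, sum_sdiff hAB]

theorem union_sdiff_of_disjoint {α : Type*} [DecidableEq α] {A B C : Finset α}
    (h : Disjoint B C) : ((B \ A) ∪ C) \ B = C := by
  ext x
  have := @disjoint_left.1 h x
  simp only [mem_sdiff, mem_union]
  tauto

theorem pair_eq_pair_of_lt {a b c d : ℕ} (hab : a < b) (hcd : c < d)
    (h : ({a, b} : Finset ℕ) = {c, d}) : a = c ∧ b = d := by
  have ha : a ∈ ({c, d} : Finset ℕ) := h ▸ mem_insert_self a {b}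
  have hb : b ∈ ({c, d} : Finset ℕ) := h ▸ mem_insert_of_mem (mem_singleton_self b)
  have hc : c ∈ ({a, b} : Finset ℕ) := h.symm ▸ mem_insert_self c {d}
  simp only [mem_insert, mem_singleton] at ha hb hc
  omega

theorem mul_add_eq_mul_add_iff {p q q' r s : ℕ} (hr : r < p) (hs : s < p) :
    p * q + r = p * q' + s ↔ q = q' ∧ r = s := by
  refine ⟨fun h => ?_, fun ⟨hq, hrs⟩ => by rw [hq, hrs]⟩
  have hp : 0 < p := by omega
  have hmod := congrArg (· % p) h
  have hdiv := congrArg (· / p) h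
  simp only [Nat.mul_add_mod, Nat.mul_add_div hp, Nat.mod_eq_of_lt hr, Nat.mod_eq_of_lt hs,
    Nat.div_eq_of_lt hr, Nat.div_eq_of_lt hs] at hmod hdiv
  omega

def runner (p : ℕ) (S : Finset ℕ) (r : ℕ) : Finset ℕ :=
  (S.filter (· % p = r)).image (· / p)

def IsFlush (p : ℕ) (B : Finset ℕ) : Prop := ∀ b ∈ B, p ≤ b → b - p ∈ B

def IsClassTop (p : ℕ) (B : Finset ℕ) (m : ℕ) : Prop :=
  m ∈ B ∧ ∀ b ∈ B, b % p = m % p → b ≤ m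

section Abacus

variable {p : ℕ} {S T B B' : Finset ℕ}

theorem mem_runner {r : ℕ} (hr : r < p) {q : ℕ} : q ∈ runner p S r ↔ p * q + r ∈ S := by
  simp only [runner, mem_image, mem_filter]
  constructor
  · rintro ⟨b, ⟨hb, rfl⟩, rfl⟩
    rwa [Nat.div_add_mod]
  · intro h
    refine ⟨_, ⟨h, by rw [Nat.mul_add_mod, Nat.mod_eq_of_lt hr]⟩, ?_⟩
    rw [Nat.mul_add_div (by omega), Nat.div_eq_of_lt hr, add_zero]

theorem div_injOn_filter_mod (p r : ℕ) (S : Finset ℕ) :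
    Set.InjOn (· / p) (S.filter (· % p = r) : Set ℕ) := by
  intro x hx y hy h
  rw [mem_coe, mem_filter] at hx hy
  rw [← Nat.div_add_mod x p, ← Nat.div_add_mod y p, hx.2, hy.2]
  exact congrArg (p * · + r) h

theorem card_runner (r : ℕ) : (runner p S r).card = (S.filter (· % p = r)).card :=
  card_image_of_injOn (div_injOn_filter_mod p r S)

theorem sum_eq_sum_runner (hp : 0 < p) (S : Finset ℕ) :
    ∑ b ∈ S, b = ∑ r ∈ range p, (p * ∑ q ∈ runner p S r, q + r * (runner p S r).card) := by
  rw [← sum_fiberwise_of_maps_to (g := (· % p)) (t := range p)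
    (fun b _ => mem_range.2 (Nat.mod_lt b hp))]
  refine sum_congr rfl fun r _ => ?_
  calc ∑ b ∈ S.filter (· % p = r), b = ∑ b ∈ S.filter (· % p = r), (p * (b / p) + r) :=
        sum_congr rfl fun b hb => by rw [← (mem_filter.1 hb).2, Nat.div_add_mod]
    _ = _ := by
      rw [sum_add_distrib, sum_const, smul_eq_mul, ← mul_sum, runner,
        sum_image (div_injOn_filter_mod p r S), card_image_of_injOn (div_injOn_filter_mod p r S),
        mul_comm r]

theorem eq_of_runner_eq (hp : 0 < p) (h : ∀ r < p, runner p S r = runner p T r) : S = T := by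
  ext b
  have hr := Nat.mod_lt b hp
  have key : ∀ U : Finset ℕ, b ∈ U ↔ b / p ∈ runner p U (b % p) := fun U => by
    rw [mem_runner hr, Nat.div_add_mod]
  rw [key S, key T, h _ hr]

theorem IsFlush.sub_mul_mem (hB : IsFlush p B) {b : ℕ} (hb : b ∈ B) :
    ∀ t, p * t ≤ b → b - p * t ∈ B
  | 0, _ => by simpa using hb
  | t + 1, ht => by
    have := hB _ (hB.sub_mul_mem hb t (by rw [mul_add] at ht; omega)) (by rw [mul_add] at ht; omega)
    rwa [Nat.sub_sub, ← mul_add_one] at this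

theorem IsFlush.runner_eq_range (hB : IsFlush p B) {r : ℕ} (hr : r < p) :
    runner p B r = range (runner p B r).card := by
  refine eq_range_card_of_isLowerSet fun q q' hq'q hq => ?_
  obtain ⟨t, rfl⟩ := Nat.exists_eq_add_of_le hq'q
  rw [mem_coe, mem_runner hr] at hq ⊢
  have := hB.sub_mul_mem hq t (by rw [mul_add]; omega)
  rwa [mul_add, add_right_comm, Nat.add_sub_cancel] at this

theorem IsFlush.isClassTop (hB : IsFlush p B) {m : ℕ} (hm : m ∈ B) (hmp : m + p ∉ B) :
    IsClassTop p B m := by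
  refine ⟨hm, fun b hb hbm => ?_⟩
  by_contra! hlt
  obtain ⟨k, hk⟩ := (Nat.modEq_iff_dvd' hlt.le).1 hbm.symm
  obtain ⟨t, rfl⟩ := Nat.exists_eq_add_one_of_ne_zero (by rintro rfl; omega : k ≠ 0)
  have := hB.sub_mul_mem hb t (by rw [mul_add] at hk; omega)
  rw [mul_add] at hk
  exact hmp (by rwa [show b - p * t = m + p by omega] at this)

theorem IsClassTop.add_notMem {m : ℕ} (h : IsClassTop p B m) (hp : 0 < p) : m + p ∉ B :=
  fun hmem => by have := h.2 _ hmem (Nat.add_mod_right m p); omega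

theorem IsClassTop.add_two_mul_notMem {m : ℕ} (h : IsClassTop p B m) (hp : 0 < p) :
    m + 2 * p ∉ B :=
  fun hmem => by have := h.2 _ hmem (Nat.add_mul_mod_self_right m 2 p); omega

theorem eq_sdiff_union_of_runner_eq (hp : 0 < p) {r₀ x y : ℕ} (hr₀ : r₀ < p)
    (h₀ : runner p B' r₀ = (runner p B r₀ \ {x}) ∪ {y})
    (h : ∀ r < p, r ≠ r₀ → runner p B' r = runner p B r) :
    B' = (B \ {p * x + r₀}) ∪ {p * y + r₀} := by
  refine eq_of_runner_eq hp fun r hr => ?_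
  ext q
  rw [mem_runner hr (S := _ ∪ _)]
  simp only [mem_union, mem_sdiff, mem_singleton, mul_add_eq_mul_add_iff hr hr₀]
  by_cases hrr : r = r₀
  · subst hrr
    simp [h₀, mem_runner hr, or_comm]
  · simp [hrr, h r hr hrr, mem_runner hr]

theorem eq_sdiff_union_of_runner_eq₂ (hp : 0 < p) {r₁ r₂ x₁ x₂ y₁ y₂ : ℕ} (hr₁ : r₁ < p)
    (hr₂ : r₂ < p) (hne : r₁ ≠ r₂)
    (h₁ : runner p B' r₁ = (runner p B r₁ \ {x₁}) ∪ {y₁})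
    (h₂ : runner p B' r₂ = (runner p B r₂ \ {x₂}) ∪ {y₂})
    (h : ∀ r < p, r ≠ r₁ → r ≠ r₂ → runner p B' r = runner p B r) :
    B' = (B \ {p * x₁ + r₁, p * x₂ + r₂}) ∪ {p * y₁ + r₁, p * y₂ + r₂} := by
  refine eq_of_runner_eq hp fun r hr => ?_
  ext q
  rw [mem_runner hr (S := _ ∪ _)]
  simp only [mem_union, mem_sdiff, mem_insert, mem_singleton, mul_add_eq_mul_add_iff hr hr₁,
    mul_add_eq_mul_add_iff hr hr₂]
  by_cases hrr₁ : r = r₁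
  · subst hrr₁
    simp [h₁, hne, mem_runner hr, or_comm]
  · by_cases hrr₂ : r = r₂
    · subst hrr₂
      simp [h₂, hrr₁, mem_runner hr, or_comm]
    · simp [hrr₁, hrr₂, h r hr hrr₁ hrr₂, mem_runner hr]

theorem IsFlush.exists_runner_excess (hp : 0 < p) (hB : IsFlush p B)
    (hcnt : ∀ r, (B'.filter (· % p = r)).card = (B.filter (· % p = r)).card)
    (hsum : ∑ b ∈ B', b = ∑ b ∈ B, b + 2 * p) :
    ∃ e : ℕ → ℕ, (∀ r, ∑ q ∈ runner p B' r, q = ∑ i ∈ range (runner p B r).card, i + e r) ∧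
      ∑ r ∈ range p, e r = 2 := by
  have hcard : ∀ r, (runner p B' r).card = (runner p B r).card := fun r => by
    simp only [card_runner, hcnt]
  obtain ⟨e, he⟩ : ∃ e : ℕ → ℕ,
      ∀ r, ∑ q ∈ runner p B' r, q = ∑ i ∈ range (runner p B r).card, i + e r :=
    ⟨_, fun r => (Nat.add_sub_of_le (sum_range_le_sum_of_card_eq (hcard r))).symm⟩
  refine ⟨e, he, Nat.eq_of_mul_eq_mul_left hp ?_⟩
  have h := sum_eq_sum_runner hp B'
  rw [hsum, sum_eq_sum_runner hp B] at h
  simp only [he, hcard, mul_add, sum_add_distrib, ← mul_sum] at h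
  rw [sum_congr rfl fun r hr => by rw [hB.runner_eq_range (mem_range.1 hr)]] at h
  omega

theorem IsFlush.eq_sdiff_union_of_sum_eq (hp : 0 < p) (hB : IsFlush p B)
    (hcnt : ∀ r, (B'.filter (· % p = r)).card = (B.filter (· % p = r)).card)
    (hsum : ∑ b ∈ B', b = ∑ b ∈ B, b + 2 * p) :
    (∃ a₁ ∈ B, ∃ a₂ ∈ B, a₁ % p ≠ a₂ % p ∧ a₁ + p ∉ B ∧ a₂ + p ∉ B ∧
      B' = (B \ {a₁, a₂}) ∪ {a₁ + p, a₂ + p}) ∨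
    (∃ a ∈ B, a + 2 * p ∉ B ∧ B' = (B \ {a}) ∪ {a + 2 * p}) := by
  obtain ⟨e, he, hesum⟩ := hB.exists_runner_excess hp hcnt hsum
  obtain ⟨c, hc⟩ : ∃ c : ℕ → ℕ, ∀ r < p, runner p B r = range (c r) :=
    ⟨_, fun r hr => hB.runner_eq_range hr⟩
  have hcard : ∀ r < p, (runner p B' r).card = c r := fun r hr => by
    rw [card_runner, hcnt, ← card_runner, hc r hr, card_range]
  have hsumc : ∀ r < p, ∑ q ∈ runner p B' r, q = ∑ i ∈ range (c r), i + e r := fun r hr => by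
    rw [he, hc r hr, card_range]
  have hmemB : ∀ r < p, ∀ q, p * q + r ∈ B ↔ q < c r := fun r hr q => by
    rw [← mem_runner hr, hc r hr, mem_range]
  have hrange : ∀ r < p, e r = 0 → runner p B' r = runner p B r := fun r hr h0 => by
    rw [hc r hr, eq_range_of_sum_le (hcard r hr) (by rw [hsumc r hr, h0, add_zero])]
  have hmove : ∀ r < p, 0 < e r → e r ≤ 2 → ∃ x < c r,
      c r ≤ x + e r ∧ runner p B' r = (runner p B r \ {x}) ∪ {x + e r} := fun r hr h1 h2 => by
    rw [hc r hr]
    exact exists_eq_range_sdiff_union_of_sum_eq (hcard r hr) (hsumc r hr) h1 h2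
  rcases exists_of_sum_eq_two hesum with
    ⟨r₀, hr₀, h2, h0⟩ | ⟨r₁, hr₁, r₂, hr₂, hne, h1, h1', h0⟩
  · rw [mem_range] at hr₀
    obtain ⟨x, hx, hcx, hQ⟩ := hmove r₀ hr₀ (by omega) h2.le
    rw [h2] at hcx hQ
    have hstep : p * x + r₀ + 2 * p = p * (x + 2) + r₀ := by ring
    refine Or.inr ⟨p * x + r₀, (hmemB r₀ hr₀ x).2 hx, ?_, ?_⟩ <;> rw [hstep]
    · rw [hmemB r₀ hr₀]
      omega
    · exact eq_sdiff_union_of_runner_eq hp hr₀ hQ fun r hr hrr =>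
        hrange r hr (h0 r (mem_range.2 hr) hrr)
  · rw [mem_range] at hr₁ hr₂
    obtain ⟨x₁, hx₁, hcx₁, hQ₁⟩ := hmove r₁ hr₁ (by omega) (by omega)
    obtain ⟨x₂, hx₂, hcx₂, hQ₂⟩ := hmove r₂ hr₂ (by omega) (by omega)
    rw [h1] at hcx₁ hQ₁
    rw [h1'] at hcx₂ hQ₂
    have hstep : ∀ {x r : ℕ}, p * x + r + p = p * (x + 1) + r := by intros; ring
    have hnext : ∀ {x r}, r < p → c r ≤ x + 1 → p * x + r + p ∉ B :=
      fun hr hc => by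
        rw [hstep, hmemB _ hr]
        omega
    refine Or.inl ⟨p * x₁ + r₁, (hmemB r₁ hr₁ x₁).2 hx₁, p * x₂ + r₂, (hmemB r₂ hr₂ x₂).2 hx₂,
      ?_, hnext hr₁ hcx₁, hnext hr₂ hcx₂, ?_⟩
    · rwa [Nat.mul_add_mod, Nat.mul_add_mod, Nat.mod_eq_of_lt hr₁, Nat.mod_eq_of_lt hr₂]
    · rw [hstep, hstep]
      exact eq_sdiff_union_of_runner_eq₂ hp hr₁ hr₂ hne hQ₁ hQ₂ fun r hr hrr₁ hrr₂ =>
        hrange r hr (h0 r (mem_range.2 hr) hrr₁ hrr₂)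

theorem IsFlush.mem_of_add_two_mul_mem (hp : 0 < p) (hB : IsFlush p B)
    (hcnt : ∀ r, (B'.filter (· % p = r)).card = (B.filter (· % p = r)).card)
    (hsum : ∑ b ∈ B', b = ∑ b ∈ B, b + 2 * p) {k : ℕ} (hk : k + 2 * p ∈ B) : k ∈ B' := by
  have hk1 : k + p ∈ B := by simpa [two_mul, ← add_assoc] using hB _ hk (by omega)
  have hk0 : k ∈ B := by simpa using hB _ hk1 (by omega)
  rcases hB.eq_sdiff_union_of_sum_eq hp hcnt hsum with
    ⟨a₁, -, a₂, -, -, ha₁, ha₂, rfl⟩ | ⟨a, -, ha, rfl⟩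
  · simp only [mem_union, mem_sdiff, mem_insert, mem_singleton]
    refine Or.inl ⟨hk0, ?_⟩
    rintro (rfl | rfl)
    · exact ha₁ hk1
    · exact ha₂ hk1
  · simp only [mem_union, mem_sdiff, mem_singleton]
    exact Or.inl ⟨hk0, by rintro rfl; exact ha hk⟩

end Abacus

def residues (p : ℕ) (S : Finset ℕ) : Multiset (ZMod p) := S.val.map (↑)

theorem count_residues (p : ℕ) [NeZero p] (S : Finset ℕ) (x : ZMod p) :
    (residues p S).count x = (S.filter (· % p = x.val)).card := by
  rw [residues, Multiset.count_map, ← filter_val, card_val]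
  congr 1
  refine filter_congr fun b _ => ?_
  rw [← ZMod.val_natCast, eq_comm]
  exact ZMod.val_injective p |>.eq_iff.symm

theorem card_filter_mod_eq_iff (p : ℕ) [NeZero p] (S T : Finset ℕ) :
    (∀ r, (S.filter (· % p = r)).card = (T.filter (· % p = r)).card) ↔
      residues p S = residues p T := by
  refine ⟨fun h => Multiset.ext.2 fun x => by rw [count_residues, count_residues, h], fun h r => ?_⟩
  rcases Nat.lt_or_ge r p with hr | hr
  · have := congrArg (Multiset.count (r : ZMod p)) h
    rwa [count_residues, count_residues, ZMod.val_natCast, Nat.mod_eq_of_lt hr] at this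
  · have hempty : ∀ U : Finset ℕ, U.filter (· % p = r) = ∅ := fun U =>
      filter_eq_empty_iff.2 fun b _ => (Nat.mod_lt b (NeZero.pos p)).trans_le hr |>.ne
    rw [hempty, hempty]

namespace PartitionNat

variable {μ lam gam : PartitionNat} {M : ℕ}

theorem lt_conj_iff (μ : PartitionNat) (i j : ℕ) : i < μ.conj j ↔ j < μ.part i := by
  have hlower : IsLowerSet {i : ℕ | j + 1 ≤ μ.part i} :=
    fun a b hba ha => le_trans ha (μ.antitone hba)
  have hfin : {i : ℕ | j + 1 ≤ μ.part i}.Finite :=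
    μ.finite_support.subset fun i hi => by simp only [Set.mem_ofPred_eq] at hi; simp; omega
  rw [conj, ← mem_iff_lt_ncard_of_isLowerSet hlower hfin, Set.mem_ofPred_eq]
  omega

theorem lt_len_iff (μ : PartitionNat) (i : ℕ) : i < μ.len ↔ 0 < μ.part i := by
  have : μ.conj 0 = μ.len := by
    rw [conj, len]
    congr 1
    ext i
    simp [Nat.one_le_iff_ne_zero]
  rw [← this, lt_conj_iff]

theorem part_eq_zero_of_len_le {i : ℕ} (h : μ.len ≤ i) : μ.part i = 0 := by
  have := μ.lt_len_iff i
  omega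

theorem conj_le_len (μ : PartitionNat) (j : ℕ) : μ.conj j ≤ μ.len := by
  by_contra! h
  have := (μ.lt_conj_iff _ j).1 h
  have := (μ.lt_len_iff μ.len).2 (by omega)
  omega

theorem conj_antitone (μ : PartitionNat) : Antitone μ.conj := fun j j' hjj' => by
  by_contra! h
  have := (μ.lt_conj_iff _ j').1 h
  have := (μ.lt_conj_iff (μ.conj j) j).2 (by omega)
  omega

theorem mem_betaSet {b : ℕ} : b ∈ betaSet M μ ↔ ∃ i < M, μ.part i + (M - 1 - i) = b := by
  simp [betaSet]

theorem bead_lt_bead {i i' : ℕ} (h : i < i') (hi' : i' < M) :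
    μ.part i' + (M - 1 - i') < μ.part i + (M - 1 - i) := by
  have := μ.antitone h.le
  omega

theorem bead_injOn (μ : PartitionNat) (M : ℕ) :
    Set.InjOn (fun i => μ.part i + (M - 1 - i)) (range M : Set ℕ) := by
  intro i hi i' hi' h
  simp only [coe_range, Set.mem_Iio] at hi hi'
  rcases lt_trichotomy i i' with hlt | rfl | hlt
  · exact absurd h (bead_lt_bead hlt hi').ne'
  · rfl
  · exact absurd h (bead_lt_bead hlt hi).ne

theorem card_betaSet (μ : PartitionNat) (M : ℕ) : (betaSet M μ).card = M := by
  rw [betaSet, card_image_of_injOn (bead_injOn μ M), card_range]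

theorem sum_betaSet (hM : μ.len ≤ M) :
    ∑ b ∈ betaSet M μ, b = μ.size + ∑ i ∈ range M, (M - 1 - i) := by
  rw [betaSet, sum_image (bead_injOn μ M), sum_add_distrib, size,
    finsum_eq_finsetSum_of_support_subset]
  intro i hi
  have := (μ.lt_len_iff i).2 (Nat.pos_of_ne_zero hi)
  simp only [coe_range, Set.mem_Iio]
  omega

theorem mem_betaSet_of_lt (hM : μ.len ≤ M) {k : ℕ} (hk : k < M - μ.len) :
    k ∈ betaSet M μ :=
  mem_betaSet.2 ⟨M - 1 - k, by omega, by rw [part_eq_zero_of_len_le (by omega)]; omega⟩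

theorem betaSet_subset_range (μ : PartitionNat) (M : ℕ) :
    betaSet M μ ⊆ range (M + μ.part 0) := fun b hb => by
  obtain ⟨i, hi, rfl⟩ := mem_betaSet.1 hb
  have := μ.antitone (Nat.zero_le i)
  rw [mem_range]
  omega

theorem betaSet_add_one (hM : μ.len ≤ M) :
    betaSet (M + 1) μ = insert 0 ((betaSet M μ).image (· + 1)) := by
  rw [betaSet, range_add_one, image_insert, betaSet, image_image, part_eq_zero_of_len_le hM,
    Nat.add_sub_cancel, Nat.sub_self]
  congr 1
  refine image_congr fun i hi => ?_
  simp only [coe_range, Set.mem_Iio] at hi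
  simp only [Function.comp_apply]
  omega

/-- The `j`-th smallest number missing from `betaSet M μ`; the hook length at `(i, j)` is the
`i`-th bead minus `gap M μ j`. -/
noncomputable def gap (M : ℕ) (μ : PartitionNat) (j : ℕ) : ℕ := M + j - μ.conj j

theorem gap_notMem_betaSet (hM : μ.len ≤ M) (j : ℕ) : gap M μ j ∉ betaSet M μ := by
  rw [mem_betaSet]
  rintro ⟨i, hi, heq⟩
  have := (μ.conj_le_len j).trans hM
  have := μ.lt_conj_iff i j
  rw [gap] at heq
  omega

theorem gap_lt_bead_iff (hM : μ.len ≤ M) {i : ℕ} (hi : i < M) (j : ℕ) :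
    gap M μ j < μ.part i + (M - 1 - i) ↔ j < μ.part i := by
  have := (μ.conj_le_len j).trans hM
  have := μ.lt_conj_iff i j
  rw [gap]
  omega

theorem gap_strictMono (hM : μ.len ≤ M) : StrictMono (gap M μ) := fun j j' h => by
  have := (μ.conj_le_len j).trans hM
  have := μ.conj_antitone h.le
  simp only [gap]
  omega

theorem exists_gap_eq (hM : μ.len ≤ M) {y : ℕ} (hy : y ∉ betaSet M μ)
    (hyM : y < M + μ.part 0) : ∃ j, gap M μ j = y := by
  -- the first `μ.part 0` gaps and the non-beads below `M + μ.part 0` are equally many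
  have hsub : (range (μ.part 0)).image (gap M μ) ⊆ range (M + μ.part 0) \ betaSet M μ :=
    fun x hx => by
      obtain ⟨j, hj, rfl⟩ := mem_image.1 hx
      rw [mem_range] at hj
      exact mem_sdiff.2 ⟨mem_range.2 (by simp only [gap]; omega), gap_notMem_betaSet hM j⟩
  have hcard : (range (M + μ.part 0) \ betaSet M μ).card ≤
      ((range (μ.part 0)).image (gap M μ)).card := by
    rw [card_sdiff_of_subset (betaSet_subset_range μ M), card_betaSet, card_range,
      card_image_of_injective _ (gap_strictMono hM).injective, card_range]
    omega
  have hy' : y ∈ range (M + μ.part 0) \ betaSet M μ := mem_sdiff.2 ⟨mem_range.2 hyM, hy⟩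
  rw [← eq_of_subset_of_card_le hsub hcard] at hy'
  obtain ⟨j, -, hj⟩ := mem_image.1 hy'
  exact ⟨j, hj⟩

theorem hook_eq_bead_sub_gap (hM : μ.len ≤ M) {i j : ℕ} (hn : j < μ.part i) :
    μ.hook i j = μ.part i + (M - 1 - i) - gap M μ j := by
  have := (μ.lt_len_iff i).2 (by omega)
  have := (μ.lt_conj_iff i j).2 hn
  have := (μ.conj_le_len j).trans hM
  rw [hook, gap]
  omega

theorem IsCore.isFlush_betaSet {p : ℕ} (hc : IsCore p μ) (hM : μ.len ≤ M) :
    IsFlush p (betaSet M μ) := by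
  intro b hb hpb
  by_contra hno
  -- the gap `b - p` below the bead `b` gives a node with hook length `p`
  have hp : 0 < p := Nat.pos_of_ne_zero fun h => hno (by rwa [h, Nat.sub_zero])
  obtain ⟨i, hi, rfl⟩ := mem_betaSet.1 hb
  obtain ⟨j, hj⟩ := exists_gap_eq hM hno
    (by have := mem_range.1 (betaSet_subset_range μ M hb); omega)
  have hn : j < μ.part i := (gap_lt_bead_iff hM hi j).1 (by omega)
  exact hc i j hn (by rw [hook_eq_bead_sub_gap hM hn, hj, Nat.sub_sub_self hpb])

theorem len_le_of_range_subset_betaSet (hM : μ.len ≤ M) {K : ℕ}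
    (h : range K ⊆ betaSet M μ) : μ.len ≤ M - K := by
  have hKM : K ≤ M := by simpa [card_betaSet] using card_le_card h
  by_contra! hlt
  -- beads at indices `≤ M - K` would all be `≥ K`, leaving `K - 1` indices for the beads `< K`
  have hpos : 0 < μ.part (M - K) := (μ.lt_len_iff _).1 hlt
  have hsub : range K ⊆ (Ico (M - K + 1) M).image (fun i => μ.part i + (M - 1 - i)) := by
    intro k hk
    obtain ⟨i, hi, rfl⟩ := mem_betaSet.1 (h hk)
    refine mem_image_of_mem _ (mem_Ico.2 ⟨?_, hi⟩)
    by_contra! hiK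
    have := μ.antitone (Nat.le_of_lt_succ hiK)
    have := mem_range.1 hk
    omega
  have := (card_le_card hsub).trans card_image_le
  simp only [card_range, Nat.card_Ico] at this
  omega

theorem residues_betaSet_add_one (p : ℕ) (hM : μ.len ≤ M) :
    residues p (betaSet (M + 1) μ) = 0 ::ₘ (residues p (betaSet M μ)).map (· + 1) := by
  rw [residues, betaSet_add_one hM, insert_val_of_notMem (by simp),
    image_val_of_injOn (add_left_injective 1).injOn, Multiset.map_cons, Multiset.map_map,
    residues, Multiset.map_map]
  simp

theorem residues_betaSet_eq_iff_of_le (p : ℕ) (hl : lam.len ≤ M) (hg : gam.len ≤ M) {M' : ℕ}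
    (hMM' : M ≤ M') :
    residues p (betaSet M' lam) = residues p (betaSet M' gam) ↔
      residues p (betaSet M lam) = residues p (betaSet M gam) := by
  induction M', hMM' using Nat.le_induction with
  | base => rfl
  | succ M' hle ih =>
    rw [residues_betaSet_add_one p (hl.trans hle), residues_betaSet_add_one p (hg.trans hle),
      Multiset.cons_inj_right, (Multiset.map_injective (add_left_injective 1)).eq_iff, ih]

theorem sum_betaSet_eq_add_iff (hl : lam.len ≤ M) (hg : gam.len ≤ M) (w : ℕ) :
    ∑ b ∈ betaSet M lam, b = ∑ b ∈ betaSet M gam, b + w ↔ lam.size = gam.size + w := by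
  rw [sum_betaSet hl, sum_betaSet hg]
  omega

end PartitionNat

section Block

variable {p N : ℕ} {γ lam : PartitionNat}

theorem InBlock.len_le_and_betaSet_eq (hp : 0 < p) (h : InBlock p 2 γ lam)
    (hN : γ.len + 2 * p ≤ N) :
    lam.len ≤ N ∧
    ((∃ a₁ ∈ betaSet N γ, ∃ a₂ ∈ betaSet N γ, a₁ % p ≠ a₂ % p ∧ a₁ + p ∉ betaSet N γ ∧
        a₂ + p ∉ betaSet N γ ∧ betaSet N lam = (betaSet N γ \ {a₁, a₂}) ∪ {a₁ + p, a₂ + p}) ∨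
      (∃ a ∈ betaSet N γ, a + 2 * p ∉ betaSet N γ ∧
        betaSet N lam = (betaSet N γ \ {a}) ∪ {a + 2 * p})) := by
  have := NeZero.of_pos hp
  obtain ⟨hsize, hγ, N', hl', hg', hcnt'⟩ := h
  -- classifying at `N'` bounds `lam.len`, which lets the residue counts move from `N'` to `N`
  have hlen : lam.len ≤ N := by
    have hsub : range (N' - (γ.len + 2 * p)) ⊆ betaSet N' lam := fun k hk =>
      (hγ.isFlush_betaSet hg').mem_of_add_two_mul_mem hp hcnt'
        ((sum_betaSet_eq_add_iff hl' hg' _).2 hsize)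
        (mem_betaSet_of_lt hg' (by rw [mem_range] at hk; omega))
    have := len_le_of_range_subset_betaSet hl' hsub
    omega
  have hcnt : ∀ r, ((betaSet N lam).filter (· % p = r)).card =
      ((betaSet N γ).filter (· % p = r)).card := by
    rw [card_filter_mod_eq_iff, residues_betaSet_eq_iff_of_le p (M := min N N') (by omega)
      (by omega) (min_le_left _ _), ← residues_betaSet_eq_iff_of_le p (by omega) (by omega)
      (min_le_right _ _), ← card_filter_mod_eq_iff]
    exact hcnt'
  exact ⟨hlen, (hγ.isFlush_betaSet (by omega)).eq_sdiff_union_of_sum_eq hp hcnt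
    ((sum_betaSet_eq_add_iff hlen (by omega) _).2 hsize)⟩

theorem inBlock_two_of_betaSet_eq (hγ : IsCore p γ) (hl : lam.len ≤ N) (hg : γ.len ≤ N)
    {A : Finset ℕ} {k : ℕ} (hk : p ∣ k) (hAk : A.card * k = 2 * p) (hA : A ⊆ betaSet N γ)
    (hdisj : Disjoint (betaSet N γ) (A.image (· + k)))
    (h : betaSet N lam = (betaSet N γ \ A) ∪ A.image (· + k)) : InBlock p 2 γ lam := by
  refine ⟨(sum_betaSet_eq_add_iff hl hg _).1 ?_, hγ, N, hl, hg, fun r => ?_⟩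
  · have := sum_sdiff_union_image (add_left_injective k) hA hdisj id
    simp only [id, sum_add_distrib, sum_const, smul_eq_mul] at this
    rw [h]
    omega
  · have := sum_sdiff_union_image (add_left_injective k) hA hdisj
      (fun b => if b % p = r then 1 else 0)
    obtain ⟨t, rfl⟩ := hk
    simp only [Nat.add_mul_mod_self_left, add_left_inj] at this
    rw [h, card_filter, card_filter, this]

end Block

section Rho

variable {p N : ℕ} {γ lam : PartitionNat} {ρ : ℕ → ℕ}

theorem IsRho.injOn (hρ : IsRho p N γ ρ) : Set.InjOn ρ (Set.Iio p) := by
  intro i hi j hj h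
  rcases lt_trichotomy i j with hij | hij | hij
  · exact absurd h (hρ.1 i j hij hj).ne
  · exact hij
  · exact absurd h (hρ.1 j i hij hi).ne'

theorem IsRho.isClassTop (hρ : IsRho p N γ ρ) {i : ℕ} (hi : i < p) :
    IsClassTop p (betaSet N γ) (ρ i) :=
  hρ.2.1 i hi

theorem IsRho.exists_eq (hp : 0 < p) (hρ : IsRho p N γ ρ) {m : ℕ}
    (hm : IsClassTop p (betaSet N γ) m) : ∃ i < p, ρ i = m := by
  obtain ⟨i, hi, hir⟩ := hρ.2.2 (m % p) (Nat.mod_lt m hp)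
  exact ⟨i, hi, le_antisymm (hm.2 _ (hρ.isClassTop hi).1 hir)
    ((hρ.isClassTop hi).2 m hm.1 hir.symm)⟩

theorem IsRho.pairwise_distinct (hp : 0 < p) (hρ : IsRho p N γ ρ) :
    (∀ i j k l, i < j → j < p → k < l → l < p →
        pairBeta p (betaSet N γ) ρ i j = pairBeta p (betaSet N γ) ρ k l → i = k ∧ j = l) ∧
     (∀ i k, i < p → k < p →
        oneBeta p (betaSet N γ) ρ i = oneBeta p (betaSet N γ) ρ k → i = k) ∧
     (∀ i k, i < p → k < p →
        sqBeta p (betaSet N γ) ρ i = sqBeta p (betaSet N γ) ρ k → i = k) ∧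
     (∀ i j k, i < j → j < p → k < p →
        pairBeta p (betaSet N γ) ρ i j ≠ oneBeta p (betaSet N γ) ρ k) ∧
     (∀ i j k, i < j → j < p → k < p →
        pairBeta p (betaSet N γ) ρ i j ≠ sqBeta p (betaSet N γ) ρ k) ∧
     (∀ i k, i < p → k < p →
        oneBeta p (betaSet N γ) ρ i ≠ sqBeta p (betaSet N γ) ρ k) := by
  set B := betaSet N γ
  have hpair : ∀ i j, i < p → j < p → pairBeta p B ρ i j \ B = {ρ i + p, ρ j + p} :=
    fun i j hi hj => union_sdiff_of_disjoint <| disjoint_right.2 <| by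
      simpa using ⟨(hρ.isClassTop hi).add_notMem hp, (hρ.isClassTop hj).add_notMem hp⟩
  have hone : ∀ i < p, oneBeta p B ρ i \ B = {ρ i + 2 * p} := fun i hi =>
    union_sdiff_of_disjoint <| disjoint_singleton_right.2 <|
      (hρ.isClassTop hi).add_two_mul_notMem hp
  have hsq : ∀ i < p, sqBeta p B ρ i \ B = {ρ i + p} := fun i hi =>
    union_sdiff_of_disjoint <| disjoint_singleton_right.2 <| (hρ.isClassTop hi).add_notMem hp
  have hcard : ∀ i j, i < j → j < p → (pairBeta p B ρ i j \ B).card = 2 := fun i j hij hj => by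
    rw [hpair i j (hij.trans hj) hj, card_pair (by have := hρ.1 i j hij hj; omega)]
  refine ⟨fun i j k l hij hj hkl hl h => ?_, fun i k hi hk h => ?_, fun i k hi hk h => ?_,
    fun i j k hij hj hk h => ?_, fun i j k hij hj hk h => ?_, fun i k hi hk h => ?_⟩
  · have := congrArg (· \ B) h
    simp only [hpair i j (hij.trans hj) hj, hpair k l (hkl.trans hl) hl] at this
    have := pair_eq_pair_of_lt (by have := hρ.1 i j hij hj; omega)
      (by have := hρ.1 k l hkl hl; omega) this
    exact ⟨hρ.injOn (hij.trans hj) (hkl.trans hl) (by omega), hρ.injOn hj hl (by omega)⟩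
  · have := congrArg (· \ B) h
    simp only [hone i hi, hone k hk, singleton_inj, add_left_inj] at this
    exact hρ.injOn hi hk this
  · have := congrArg (· \ B) h
    simp only [hsq i hi, hsq k hk, singleton_inj, add_left_inj] at this
    exact hρ.injOn hi hk this
  · have := hcard i j hij hj
    rw [h, hone k hk, card_singleton] at this
    omega
  · have := hcard i j hij hj
    rw [h, hsq k hk, card_singleton] at this
    omega
  · have := congrArg (· \ B) h
    simp only [hone i hi, hsq k hk, singleton_inj] at this
    have hk' : ρ i + p = ρ k := by omega
    exact (hρ.isClassTop hi).add_notMem hp (hk' ▸ (hρ.isClassTop hk).1)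

theorem IsRho.betaSet_cases_of_inBlock (hp : 0 < p) (hρ : IsRho p N γ ρ)
    (hN : γ.len + 2 * p ≤ N) (h : InBlock p 2 γ lam) :
    lam.len ≤ N ∧
      ((∃ i j, i < j ∧ j < p ∧ betaSet N lam = pairBeta p (betaSet N γ) ρ i j) ∨
       (∃ i, i < p ∧ betaSet N lam = oneBeta p (betaSet N γ) ρ i) ∨
       (∃ i, i < p ∧ betaSet N lam = sqBeta p (betaSet N γ) ρ i)) := by
  have hB : IsFlush p (betaSet N γ) := h.2.1.isFlush_betaSet (by omega)
  obtain ⟨hlen, ⟨a₁, ha₁, a₂, ha₂, hne, ha₁', ha₂', heq⟩ | ⟨a, ha, ha', heq⟩⟩ :=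
    h.len_le_and_betaSet_eq hp hN
  · obtain ⟨i, hi, rfl⟩ := hρ.exists_eq hp (hB.isClassTop ha₁ ha₁')
    obtain ⟨j, hj, rfl⟩ := hρ.exists_eq hp (hB.isClassTop ha₂ ha₂')
    refine ⟨hlen, Or.inl ?_⟩
    rcases lt_or_gt_of_ne (fun hij : i = j => hne (by rw [hij])) with hij | hij
    · exact ⟨i, j, hij, hj, heq⟩
    · exact ⟨j, i, hij, hi, by rw [heq, pairBeta, pair_comm, pair_comm (ρ i + p)]⟩
  · by_cases hap : a + p ∈ betaSet N γ
    · obtain ⟨i, hi, hρi⟩ :=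
        hρ.exists_eq hp (hB.isClassTop hap (by rwa [add_assoc, ← two_mul]))
      refine ⟨hlen, Or.inr (Or.inr ⟨i, hi, ?_⟩)⟩
      rw [heq, sqBeta, hρi, Nat.add_sub_cancel, add_assoc, ← two_mul]
    · obtain ⟨i, hi, rfl⟩ := hρ.exists_eq hp (hB.isClassTop ha hap)
      exact ⟨hlen, Or.inr (Or.inl ⟨i, hi, heq⟩)⟩

theorem IsRho.inBlock_of_betaSet_cases (hp : 0 < p) (hρ : IsRho p N γ ρ) (hγ : IsCore p γ)
    (hN : γ.len + 2 * p ≤ N) (hl : lam.len ≤ N)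
    (h : (∃ i j, i < j ∧ j < p ∧ betaSet N lam = pairBeta p (betaSet N γ) ρ i j) ∨
       (∃ i, i < p ∧ betaSet N lam = oneBeta p (betaSet N γ) ρ i) ∨
       (∃ i, i < p ∧ betaSet N lam = sqBeta p (betaSet N γ) ρ i)) :
    InBlock p 2 γ lam := by
  have hg : γ.len ≤ N := by omega
  rcases h with ⟨i, j, hij, hj, h⟩ | ⟨i, hi, h⟩ | ⟨i, hi, h⟩
  · have hi : i < p := hij.trans hj
    refine inBlock_two_of_betaSet_eq hγ hl hg (A := {ρ i, ρ j}) (dvd_refl p) ?_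
      (insert_subset (hρ.isClassTop hi).1 (singleton_subset_iff.2 (hρ.isClassTop hj).1)) ?_
      (by rw [h, pairBeta, image_insert, image_singleton])
    · rw [card_pair (hρ.1 i j hij hj).ne]
    · simpa using ⟨(hρ.isClassTop hi).add_notMem hp, (hρ.isClassTop hj).add_notMem hp⟩
  · refine inBlock_two_of_betaSet_eq hγ hl hg (A := {ρ i}) (dvd_mul_left p 2) (by simp)
      (singleton_subset_iff.2 (hρ.isClassTop hi).1) ?_ (by rw [h, oneBeta, image_singleton])
    simpa using (hρ.isClassTop hi).add_two_mul_notMem hp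
  · have hpi : p ≤ ρ i := by
      have hsmall := mem_betaSet_of_lt hg (k := ρ i % p + p) (by have := Nat.mod_lt (ρ i) hp; omega)
      have := (hρ.isClassTop hi).2 _ hsmall (by simp)
      omega
    have himage : ({ρ i - p} : Finset ℕ).image (· + 2 * p) = {ρ i + p} := by
      rw [image_singleton]
      congr 1
      omega
    refine inBlock_two_of_betaSet_eq hγ hl hg (A := {ρ i - p}) (dvd_mul_left p 2) (by simp)
      (singleton_subset_iff.2 (hγ.isFlush_betaSet hg _ (hρ.isClassTop hi).1 hpi)) ?_
      (by rw [himage, h, sqBeta])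
    rw [himage]
    simpa using (hρ.isClassTop hi).add_notMem hp

end Rho

theorem stmt1_general (p : ℕ) (hp : p.Prime)
    (γ : PartitionNat) (hγ : IsCore p γ)
    (N : ℕ) (hNlen : γ.len + 2 * p ≤ N)
    (ρ : ℕ → ℕ) (hρ : IsRho p N γ ρ) :
    ((∀ i j k l, i < j → j < p → k < l → l < p →
        pairBeta p (betaSet N γ) ρ i j = pairBeta p (betaSet N γ) ρ k l → i = k ∧ j = l) ∧
     (∀ i k, i < p → k < p →
        oneBeta p (betaSet N γ) ρ i = oneBeta p (betaSet N γ) ρ k → i = k) ∧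
     (∀ i k, i < p → k < p →
        sqBeta p (betaSet N γ) ρ i = sqBeta p (betaSet N γ) ρ k → i = k) ∧
     (∀ i j k, i < j → j < p → k < p →
        pairBeta p (betaSet N γ) ρ i j ≠ oneBeta p (betaSet N γ) ρ k) ∧
     (∀ i j k, i < j → j < p → k < p →
        pairBeta p (betaSet N γ) ρ i j ≠ sqBeta p (betaSet N γ) ρ k) ∧
     (∀ i k, i < p → k < p →
        oneBeta p (betaSet N γ) ρ i ≠ sqBeta p (betaSet N γ) ρ k)) ∧
    (∀ lam : PartitionNat,
      InBlock p 2 γ lam ↔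
        (lam.len ≤ N ∧
          ((∃ i j, i < j ∧ j < p ∧ betaSet N lam = pairBeta p (betaSet N γ) ρ i j) ∨
           (∃ i, i < p ∧ betaSet N lam = oneBeta p (betaSet N γ) ρ i) ∨
           (∃ i, i < p ∧ betaSet N lam = sqBeta p (betaSet N γ) ρ i)))) :=
  ⟨hρ.pairwise_distinct hp.pos, fun _ => ⟨hρ.betaSet_cases_of_inBlock hp.pos hNlen,
    fun ⟨hl, h⟩ => hρ.inBlock_of_betaSet_cases hp.pos hγ hNlen hl h⟩⟩

/-- the partitions `⟨i,j⟩` (`0 ≤ i < j ≤ p−1`), `⟨i⟩` and `⟨i²⟩`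
(`0 ≤ i ≤ p−1`) are pairwise distinct and are precisely the partitions of
`|γ| + 2p` with `p`-core `γ`. -/
theorem stmt1 (p : ℕ) (hp : p.Prime) (hodd : Odd p)
    (γ : PartitionNat) (hγ : IsCore p γ)
    (N : ℕ) (hN : p ∣ N) (hNlen : γ.len + 2 * p ≤ N)
    (ρ : ℕ → ℕ) (hρ : IsRho p N γ ρ) :
    ((∀ i j k l, i < j → j < p → k < l → l < p →
        pairBeta p (betaSet N γ) ρ i j = pairBeta p (betaSet N γ) ρ k l → i = k ∧ j = l) ∧
     (∀ i k, i < p → k < p →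
        oneBeta p (betaSet N γ) ρ i = oneBeta p (betaSet N γ) ρ k → i = k) ∧
     (∀ i k, i < p → k < p →
        sqBeta p (betaSet N γ) ρ i = sqBeta p (betaSet N γ) ρ k → i = k) ∧
     (∀ i j k, i < j → j < p → k < p →
        pairBeta p (betaSet N γ) ρ i j ≠ oneBeta p (betaSet N γ) ρ k) ∧
     (∀ i j k, i < j → j < p → k < p →
        pairBeta p (betaSet N γ) ρ i j ≠ sqBeta p (betaSet N γ) ρ k) ∧
     (∀ i k, i < p → k < p →
        oneBeta p (betaSet N γ) ρ i ≠ sqBeta p (betaSet N γ) ρ k)) ∧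
    (∀ lam : PartitionNat,
      InBlock p 2 γ lam ↔
        (lam.len ≤ N ∧
          ((∃ i j, i < j ∧ j < p ∧ betaSet N lam = pairBeta p (betaSet N γ) ρ i j) ∨
           (∃ i, i < p ∧ betaSet N lam = oneBeta p (betaSet N γ) ρ i) ∨
           (∃ i, i < p ∧ betaSet N lam = sqBeta p (betaSet N γ) ρ i)))) :=
  stmt1_general p hp γ hγ N hNlen ρ hρ

end ArxivW2
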